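/- Let N ≥ 3. For every c > 0 there exists λ₀ > 0 such that for all 0 < λ < λ₀: (∫_{ℝ^N} |f'(W(x) − W_λ(x)) − f'(W_λ(x)) − f'(W(x))|^{N/2} dx)^{2/N} ≤ c, where f'(u) = ((N+2)/(N−2))|u|^{4/(N−2)}. -/

import Mathlib

/-!
With `p = 4 / (N - 2)` we have `f'(u) = κ |u| ^ p`, so the integrand is a multiple of
`|(|a - b|) ^ p - a ^ p - b ^ p| ^ (N / 2)` with `a = W x`, `b = W_λ x`. Subadditivity of `t ^ p`
(for `p ≤ 1`) or Bernoulli's inequality (for `p ≥ 1`) bounds the bracket by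
`(p + 2) max(a, b) ^ (p - θ) min(a, b) ^ θ` for every `θ ≤ min(p, 1)`. After raising to the power
`N / 2`, the two exponents add up to the critical exponent `2^* = 2N / (N - 2)`, and Hölder's
inequality bounds the integral by a constant times `(∫ min(W, W_λ) ^ 2^*) ^ ((N - 2) / (N + 2))`
(for `θ = 4 / (N + 2)`); the constant involves
`∫ max(W, W_λ) ^ 2^* ≤ 2 ∫ W ^ 2^*`, which is uniform in `λ` by scale invariance. Finally
`min(W, W_λ) ^ 2^* ≤ W ^ 2^*` is integrable and tends to `0` off the origin as `λ → 0`, so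
dominated convergence concludes.
-/

open MeasureTheory Real

noncomputable def groundW (N : ℕ) (x : EuclideanSpace ℝ (Fin N)) : ℝ :=
  (1 + ‖x‖ ^ 2 / ((N : ℝ) * ((N : ℝ) - 2))) ^ (-(((N : ℝ) - 2) / 2))

noncomputable def fprime (N : ℕ) (u : ℝ) : ℝ :=
  (((N : ℝ) + 2) / ((N : ℝ) - 2)) * |u| ^ ((4 : ℝ) / ((N : ℝ) - 2))

/-- The rescaled ground state `W_λ`. -/
noncomputable def Wl (N : ℕ) (lam : ℝ) (x : EuclideanSpace ℝ (Fin N)) : ℝ :=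
  lam ^ (-(((N : ℝ) - 2) / 2)) * groundW N (lam⁻¹ • x)

open Filter Topology

namespace Real

lemma rpow_le_rpow_sub_mul_rpow {a b s θ : ℝ} (hb : 0 < b) (hba : b ≤ a) (hθ : θ ≤ s) :
    b ^ s ≤ a ^ (s - θ) * b ^ θ :=
  calc b ^ s = b ^ (s - θ) * b ^ θ := by rw [← rpow_add hb, sub_add_cancel]
    _ ≤ a ^ (s - θ) * b ^ θ := by gcongr

lemma rpow_sub_rpow_sub_le_of_le_one {a b p : ℝ} (hb : 0 ≤ b) (hba : b ≤ a) (hp : 0 ≤ p)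
    (hp1 : p ≤ 1) : a ^ p - (a - b) ^ p ≤ b ^ p := by
  have := rpow_add_le_add_rpow (sub_nonneg.2 hba) hb hp hp1
  rw [sub_add_cancel] at this
  linarith

lemma rpow_sub_rpow_sub_le_of_one_le {a b p : ℝ} (hb : 0 ≤ b) (hba : b ≤ a) (hp : 1 ≤ p) :
    a ^ p - (a - b) ^ p ≤ p * a ^ (p - 1) * b := by
  obtain rfl | ha := (hb.trans hba).eq_or_lt
  · obtain rfl : b = 0 := le_antisymm hba hb
    simp
  -- Bernoulli's inequality `1 - p t ≤ (1 - t) ^ p` at `t = b / a`, scaled by `a ^ p`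
  have hbern := one_add_mul_self_le_rpow_one_add (s := -(b / a)) (by
    linarith [(div_le_one ha).2 hba]) hp
  have hscale : a ^ p * (1 + -(b / a)) ^ p = (a - b) ^ p := by
    rw [← mul_rpow ha.le (by linarith [(div_le_one ha).2 hba]), mul_add, mul_neg,
      mul_div_cancel₀ _ ha.ne', mul_one, sub_eq_add_neg]
  have hderiv : a ^ p * (b / a) = a ^ (p - 1) * b := by
    rw [rpow_sub_one ha.ne']; ring
  nlinarith [mul_le_mul_of_nonneg_left hbern (rpow_nonneg ha.le p)]

lemma abs_rpow_sub_sub_rpow_sub_rpow_le {a b p θ : ℝ} (hb : 0 < b) (hba : b ≤ a) (hp : 0 < p)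
    (hθp : θ ≤ p) (hθ1 : θ ≤ 1) :
    |(a - b) ^ p - b ^ p - a ^ p| ≤ (p + 2) * (a ^ (p - θ) * b ^ θ) := by
  have ha : 0 < a := hb.trans_le hba
  have hsub : (a - b) ^ p ≤ a ^ p := rpow_le_rpow (by linarith) (by linarith) hp.le
  have hbp : b ^ p ≤ a ^ (p - θ) * b ^ θ := rpow_le_rpow_sub_mul_rpow hb hba hθp
  have hdiff : a ^ p - (a - b) ^ p ≤ (p + 1) * (a ^ (p - θ) * b ^ θ) := by
    have hprod : 0 ≤ a ^ (p - θ) * b ^ θ := by positivity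
    rcases le_total p 1 with hp1 | hp1
    · nlinarith [rpow_sub_rpow_sub_le_of_le_one hb.le hba hp.le hp1]
    · have hb1 : b ^ (1 : ℝ) ≤ a ^ (1 - θ) * b ^ θ := rpow_le_rpow_sub_mul_rpow hb hba hθ1
      have hpow : a ^ (p - 1) * a ^ (1 - θ) = a ^ (p - θ) := by
        rw [← rpow_add ha]; ring_nf
      calc a ^ p - (a - b) ^ p ≤ p * (a ^ (p - 1) * b ^ (1 : ℝ)) := by
            rw [rpow_one, ← mul_assoc]; exact rpow_sub_rpow_sub_le_of_one_le hb.le hba hp1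
        _ ≤ p * (a ^ (p - 1) * (a ^ (1 - θ) * b ^ θ)) := by gcongr
        _ = p * (a ^ (p - θ) * b ^ θ) := by rw [← hpow]; ring
        _ ≤ (p + 1) * (a ^ (p - θ) * b ^ θ) := by gcongr; linarith
  rw [abs_of_nonpos (by linarith [rpow_nonneg hb.le p])]
  linarith

lemma abs_rpow_abs_sub_sub_rpow_sub_rpow_le {a b p θ : ℝ} (ha : 0 < a) (hb : 0 < b) (hp : 0 < p)
    (hθp : θ ≤ p) (hθ1 : θ ≤ 1) :
    |(|a - b|) ^ p - b ^ p - a ^ p| ≤ (p + 2) * (max a b ^ (p - θ) * min a b ^ θ) := by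
  rcases le_total b a with h | h
  · rw [max_eq_left h, min_eq_right h, abs_of_nonneg (sub_nonneg.2 h)]
    exact abs_rpow_sub_sub_rpow_sub_rpow_le hb h hp hθp hθ1
  · rw [max_eq_right h, min_eq_left h, abs_sub_comm a b, abs_of_nonneg (sub_nonneg.2 h),
      sub_right_comm]
    exact abs_rpow_sub_sub_rpow_sub_rpow_le ha h hp hθp hθ1

lemma max_rpow_le_rpow_add_rpow {a b q : ℝ} (ha : 0 ≤ a) (hb : 0 ≤ b) (hq : 0 ≤ q) :
    max a b ^ q ≤ a ^ q + b ^ q := by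
  rw [rpow_max ha hb hq]
  exact max_le_add_of_nonneg (rpow_nonneg ha q) (rpow_nonneg hb q)

end Real

section Holder

variable {X : Type*} [MeasurableSpace X] {μ : Measure X}

lemma memLp_rpow_of_integrable_rpow {f : X → ℝ} (hf : 0 ≤ f) (hfm : AEStronglyMeasurable f μ)
    {α q : ℝ} (hα : 0 < α) (hq : 0 < q) (hfi : Integrable (fun x => f x ^ q) μ) :
    MemLp (fun x => f x ^ α) (ENNReal.ofReal (q / α)) μ := by
  have hqα : 0 < q / α := div_pos hq hα
  rw [← integrable_norm_rpow_iff ((continuous_rpow_const hα.le).comp_aestronglyMeasurable hfm)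
    (by simpa using hqα) ENNReal.ofReal_ne_top, ENNReal.toReal_ofReal hqα.le]
  refine hfi.congr (Eventually.of_forall fun x => ?_)
  dsimp only
  rw [norm_of_nonneg (rpow_nonneg (hf x) α), ← rpow_mul (hf x), mul_div_cancel₀ _ hα.ne']

variable {f g : X → ℝ} {α β q : ℝ}

lemma holderConjugate_div_div (hα : 0 < α) (hβ : 0 < β) (hαβ : α + β = q) :
    (q / α).HolderConjugate (q / β) := by
  subst hαβ
  rw [Real.holderConjugate_iff]
  refine ⟨by rw [lt_div_iff₀ hα]; linarith, ?_⟩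
  rw [inv_div, inv_div, ← add_div, div_self (by positivity)]

lemma integrable_rpow_mul_rpow (hf : 0 ≤ f) (hg : 0 ≤ g) (hfm : AEStronglyMeasurable f μ)
    (hgm : AEStronglyMeasurable g μ) (hα : 0 < α) (hβ : 0 < β) (hαβ : α + β = q)
    (hfi : Integrable (fun x => f x ^ q) μ) (hgi : Integrable (fun x => g x ^ q) μ) :
    Integrable (fun x => f x ^ α * g x ^ β) μ :=
  have := (holderConjugate_div_div hα hβ hαβ).ennrealOfReal
  (memLp_rpow_of_integrable_rpow hf hfm hα (by linarith) hfi).integrable_mul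
    (memLp_rpow_of_integrable_rpow hg hgm hβ (by linarith) hgi)

lemma integral_rpow_mul_rpow_le (hf : 0 ≤ f) (hg : 0 ≤ g) (hfm : AEStronglyMeasurable f μ)
    (hgm : AEStronglyMeasurable g μ) (hα : 0 < α) (hβ : 0 < β) (hαβ : α + β = q)
    (hfi : Integrable (fun x => f x ^ q) μ) (hgi : Integrable (fun x => g x ^ q) μ) :
    ∫ x, f x ^ α * g x ^ β ∂μ ≤ (∫ x, f x ^ q ∂μ) ^ (α / q) * (∫ x, g x ^ q ∂μ) ^ (β / q) := by
  have key := integral_mul_le_Lp_mul_Lq_of_nonneg (holderConjugate_div_div hα hβ hαβ)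
    (Eventually.of_forall fun x => rpow_nonneg (hf x) α)
    (Eventually.of_forall fun x => rpow_nonneg (hg x) β)
    (memLp_rpow_of_integrable_rpow hf hfm hα (by linarith) hfi)
    (memLp_rpow_of_integrable_rpow hg hgm hβ (by linarith) hgi)
  have hpow : ∀ (h : X → ℝ), 0 ≤ h → ∀ γ ≠ 0,
      (fun x => (h x ^ γ) ^ (q / γ)) = fun x => h x ^ q := fun h hh γ hγ =>
    funext fun x => by rw [← rpow_mul (hh x), mul_div_cancel₀ _ hγ]
  rwa [hpow f hf α hα.ne', hpow g hg β hβ.ne', one_div_div, one_div_div] at key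

end Holder

noncomputable def criticalExponent (N : ℕ) : ℝ := 2 * N / (N - 2)

section GroundState

variable {N : ℕ}

lemma two_lt_cast_of_three_le (hN : 3 ≤ N) : (2 : ℝ) < N := by
  have : (3 : ℝ) ≤ N := by exact_mod_cast hN
  linarith

lemma criticalExponent_pos (hN : 3 ≤ N) : 0 < criticalExponent N := by
  have := two_lt_cast_of_three_le hN
  unfold criticalExponent
  apply div_pos <;> linarith

lemma groundW_base_pos (hN : 3 ≤ N) (x : EuclideanSpace ℝ (Fin N)) :
    0 < 1 + ‖x‖ ^ 2 / ((N : ℝ) * ((N : ℝ) - 2)) := by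
  have := two_lt_cast_of_three_le hN
  have : 0 < (N : ℝ) * ((N : ℝ) - 2) := by nlinarith
  positivity

lemma groundW_pos (hN : 3 ≤ N) (x : EuclideanSpace ℝ (Fin N)) : 0 < groundW N x :=
  rpow_pos_of_pos (groundW_base_pos hN x) _

lemma continuous_groundW (hN : 3 ≤ N) : Continuous (groundW N) :=
  (by fun_prop : Continuous _).rpow_const fun x => .inl (groundW_base_pos hN x).ne'

lemma Wl_pos (hN : 3 ≤ N) {lam : ℝ} (hlam : 0 < lam) (x : EuclideanSpace ℝ (Fin N)) :
    0 < Wl N lam x :=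
  mul_pos (rpow_pos_of_pos hlam _) (groundW_pos hN _)

lemma continuous_Wl (hN : 3 ≤ N) (lam : ℝ) : Continuous (Wl N lam) :=
  continuous_const.mul ((continuous_groundW hN).comp (continuous_const_smul _))

lemma groundW_rpow_criticalExponent (hN : 3 ≤ N) (x : EuclideanSpace ℝ (Fin N)) :
    groundW N x ^ criticalExponent N =
      (1 + ‖x‖ ^ 2 / ((N : ℝ) * ((N : ℝ) - 2))) ^ (-(2 * N : ℝ) / 2) := by
  have : (N : ℝ) - 2 ≠ 0 := by linarith [two_lt_cast_of_three_le hN]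
  rw [groundW, ← rpow_mul (groundW_base_pos hN x).le, criticalExponent]
  congr 1
  field_simp

lemma integrable_groundW_rpow_criticalExponent (hN : 3 ≤ N) :
    Integrable (fun x : EuclideanSpace ℝ (Fin N) => groundW N x ^ criticalExponent N) := by
  have := two_lt_cast_of_three_le hN
  set c : ℝ := (N : ℝ) * ((N : ℝ) - 2)
  have hc : 0 < c := by positivity
  have hdecay := (integrable_rpow_neg_one_add_norm_sq (E := EuclideanSpace ℝ (Fin N))
    (μ := volume) (r := 2 * N) (by rw [finrank_euclideanSpace_fin]; linarith)).comp_smul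
    (inv_ne_zero (sqrt_pos.2 hc).ne')
  refine hdecay.congr (Eventually.of_forall fun x => ?_)
  dsimp only
  rw [groundW_rpow_criticalExponent hN, norm_smul, norm_inv, norm_of_nonneg (sqrt_nonneg c),
    mul_pow, inv_pow, sq_sqrt hc.le, inv_mul_eq_div]

lemma Wl_rpow_criticalExponent (hN : 3 ≤ N) {lam : ℝ} (hlam : 0 < lam)
    (x : EuclideanSpace ℝ (Fin N)) :
    Wl N lam x ^ criticalExponent N =
      lam ^ (-(N : ℝ)) * groundW N (lam⁻¹ • x) ^ criticalExponent N := by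
  have : (N : ℝ) - 2 ≠ 0 := by linarith [two_lt_cast_of_three_le hN]
  rw [Wl, mul_rpow (rpow_nonneg hlam.le _) (groundW_pos hN _).le, ← rpow_mul hlam.le,
    criticalExponent]
  congr 2
  field_simp

lemma integrable_Wl_rpow_criticalExponent (hN : 3 ≤ N) {lam : ℝ} (hlam : 0 < lam) :
    Integrable (fun x : EuclideanSpace ℝ (Fin N) => Wl N lam x ^ criticalExponent N) := by
  simp_rw [Wl_rpow_criticalExponent hN hlam]
  exact ((integrable_groundW_rpow_criticalExponent hN).comp_smul
    (inv_ne_zero hlam.ne')).const_mul _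

lemma integral_Wl_rpow_criticalExponent (hN : 3 ≤ N) {lam : ℝ} (hlam : 0 < lam) :
    ∫ x : EuclideanSpace ℝ (Fin N), Wl N lam x ^ criticalExponent N =
      ∫ x : EuclideanSpace ℝ (Fin N), groundW N x ^ criticalExponent N := by
  simp_rw [Wl_rpow_criticalExponent hN hlam]
  rw [integral_const_mul, Measure.integral_comp_inv_smul_of_nonneg volume
    (fun y => groundW N y ^ criticalExponent N) hlam.le,
    finrank_euclideanSpace_fin, smul_eq_mul, ← mul_assoc, ← rpow_natCast,
    ← rpow_add hlam, neg_add_cancel, rpow_zero, one_mul]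

lemma tendsto_Wl_nhdsGT_zero (hN : 3 ≤ N) {x : EuclideanSpace ℝ (Fin N)} (hx : x ≠ 0) :
    Tendsto (fun lam => Wl N lam x) (𝓝[>] 0) (𝓝 0) := by
  have := two_lt_cast_of_three_le hN
  set c : ℝ := (N : ℝ) * ((N : ℝ) - 2)
  have hc : 0 < c := by positivity
  have hr : 0 < ‖x‖ ^ 2 / c := by have := norm_pos_iff.2 hx; positivity
  -- `W_λ x = (λ (1 + |x/λ|² / c)) ^ (-(N-2)/2)` and the base blows up like `|x|² / (c λ)`
  have hbase : Tendsto (fun lam => lam * (1 + ‖lam⁻¹ • x‖ ^ 2 / c)) (𝓝[>] 0) atTop := by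
    refine tendsto_atTop_mono' _ ?_ (tendsto_inv_nhdsGT_zero.const_mul_atTop hr)
    filter_upwards [self_mem_nhdsWithin] with lam (hlam : 0 < lam)
    rw [norm_smul, norm_inv, norm_of_nonneg hlam.le]
    field_simp
    nlinarith [sq_nonneg lam, sq_nonneg ‖x‖]
  refine ((tendsto_rpow_neg_atTop (by linarith : (0 : ℝ) < ((N : ℝ) - 2) / 2)).comp
    hbase).congr' ?_
  filter_upwards [self_mem_nhdsWithin] with lam (hlam : 0 < lam)
  rw [Function.comp_apply, mul_rpow hlam.le (groundW_base_pos hN _).le]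
  rfl

lemma min_groundW_Wl_rpow_le (hN : 3 ≤ N) {lam : ℝ} (hlam : 0 < lam)
    (x : EuclideanSpace ℝ (Fin N)) :
    min (groundW N x) (Wl N lam x) ^ criticalExponent N ≤ groundW N x ^ criticalExponent N :=
  rpow_le_rpow (le_min (groundW_pos hN x).le (Wl_pos hN hlam x).le) (min_le_left _ _)
    (criticalExponent_pos hN).le

lemma integrable_min_groundW_Wl_rpow (hN : 3 ≤ N) {lam : ℝ} (hlam : 0 < lam) :
    Integrable (fun x : EuclideanSpace ℝ (Fin N) =>
      min (groundW N x) (Wl N lam x) ^ criticalExponent N) :=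
  (integrable_groundW_rpow_criticalExponent hN).mono'
    ((((continuous_groundW hN).min (continuous_Wl hN lam)).rpow_const fun _ =>
      .inr (criticalExponent_pos hN).le).aestronglyMeasurable)
    (Eventually.of_forall fun x => by
      rw [norm_of_nonneg (rpow_nonneg (le_min (groundW_pos hN x).le (Wl_pos hN hlam x).le) _)]
      exact min_groundW_Wl_rpow_le hN hlam x)

lemma max_groundW_Wl_rpow_le (hN : 3 ≤ N) {lam : ℝ} (hlam : 0 < lam)
    (x : EuclideanSpace ℝ (Fin N)) :
    max (groundW N x) (Wl N lam x) ^ criticalExponent N ≤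
      groundW N x ^ criticalExponent N + Wl N lam x ^ criticalExponent N :=
  max_rpow_le_rpow_add_rpow (groundW_pos hN x).le (Wl_pos hN hlam x).le
    (criticalExponent_pos hN).le

lemma integrable_max_groundW_Wl_rpow (hN : 3 ≤ N) {lam : ℝ} (hlam : 0 < lam) :
    Integrable (fun x : EuclideanSpace ℝ (Fin N) =>
      max (groundW N x) (Wl N lam x) ^ criticalExponent N) :=
  ((integrable_groundW_rpow_criticalExponent hN).add
    (integrable_Wl_rpow_criticalExponent hN hlam)).mono'
    ((((continuous_groundW hN).max (continuous_Wl hN lam)).rpow_const fun _ =>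
      .inr (criticalExponent_pos hN).le).aestronglyMeasurable)
    (Eventually.of_forall fun x => by
      rw [norm_of_nonneg (rpow_nonneg ((groundW_pos hN x).le.trans (le_max_left _ _)) _)]
      exact max_groundW_Wl_rpow_le hN hlam x)

lemma integral_max_groundW_Wl_rpow_le (hN : 3 ≤ N) {lam : ℝ} (hlam : 0 < lam) :
    ∫ x : EuclideanSpace ℝ (Fin N), max (groundW N x) (Wl N lam x) ^ criticalExponent N ≤
      2 * ∫ x : EuclideanSpace ℝ (Fin N), groundW N x ^ criticalExponent N := by
  have hWi := integrable_groundW_rpow_criticalExponent hN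
  have hWli := integrable_Wl_rpow_criticalExponent hN hlam
  calc _ ≤ ∫ x, (groundW N x ^ criticalExponent N + Wl N lam x ^ criticalExponent N) :=
        integral_mono (integrable_max_groundW_Wl_rpow hN hlam) (hWi.add hWli)
          (max_groundW_Wl_rpow_le hN hlam)
    _ = _ := by rw [integral_add hWi hWli, integral_Wl_rpow_criticalExponent hN hlam]; ring

end GroundState

section Interaction

variable {N : ℕ}

lemma tendsto_integral_min_rpow_criticalExponent (hN : 3 ≤ N) :
    Tendsto (fun lam => ∫ x : EuclideanSpace ℝ (Fin N),
      min (groundW N x) (Wl N lam x) ^ criticalExponent N) (𝓝[>] 0) (𝓝 0) := by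
  have hq := criticalExponent_pos hN
  have : NeZero N := ⟨by omega⟩
  conv => arg 3; rw [← integral_zero (EuclideanSpace ℝ (Fin N)) ℝ (μ := volume)]
  refine tendsto_integral_filter_of_dominated_convergence _
    (Eventually.of_forall fun lam => (((continuous_groundW hN).min
      (continuous_Wl hN lam)).rpow_const fun _ => .inr hq.le).aestronglyMeasurable)
    ?_ (integrable_groundW_rpow_criticalExponent hN) ?_
  · filter_upwards [self_mem_nhdsWithin] with lam (hlam : 0 < lam)
    refine Eventually.of_forall fun x => ?_
    rw [norm_of_nonneg (rpow_nonneg (le_min (groundW_pos hN x).le (Wl_pos hN hlam x).le) _)]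
    exact min_groundW_Wl_rpow_le hN hlam x
  · filter_upwards [Measure.ae_ne volume 0] with x hx
    have hmin := (tendsto_const_nhds (x := groundW N x)).min (tendsto_Wl_nhdsGT_zero hN hx)
    rw [min_eq_right (groundW_pos hN x).le] at hmin
    exact hmin.rpow_const_nhds_zero hq

lemma abs_fprime_sub_sub_rpow_le (hN : 3 ≤ N) {a b θ : ℝ} (ha : 0 < a) (hb : 0 < b)
    (hθp : θ ≤ 4 / ((N : ℝ) - 2)) (hθ1 : θ ≤ 1) :
    |fprime N (a - b) - fprime N b - fprime N a| ^ ((N : ℝ) / 2) ≤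
      (((N : ℝ) + 2) / ((N : ℝ) - 2) * (4 / ((N : ℝ) - 2) + 2)) ^ ((N : ℝ) / 2) *
        (max a b ^ ((4 / ((N : ℝ) - 2) - θ) * (N / 2)) * min a b ^ (θ * (N / 2))) := by
  have := two_lt_cast_of_three_le hN
  have hM : 0 ≤ max a b := ha.le.trans (le_max_left a b)
  have hm : 0 ≤ min a b := le_min ha.le hb.le
  have hbound : |fprime N (a - b) - fprime N b - fprime N a| ≤
      ((N : ℝ) + 2) / ((N : ℝ) - 2) * (4 / ((N : ℝ) - 2) + 2) *
        (max a b ^ (4 / ((N : ℝ) - 2) - θ) * min a b ^ θ) := by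
    rw [fprime, fprime, fprime, abs_of_pos ha, abs_of_pos hb, ← mul_sub, ← mul_sub, abs_mul,
      abs_of_pos (by apply div_pos <;> linarith), mul_assoc]
    gcongr
    exact abs_rpow_abs_sub_sub_rpow_sub_rpow_le ha hb (by apply div_pos <;> linarith) hθp hθ1
  calc _ ≤ _ := rpow_le_rpow (abs_nonneg _) hbound (by positivity)
    _ = _ := by
      rw [mul_rpow (by positivity) (mul_nonneg (rpow_nonneg hM _) (rpow_nonneg hm _)),
        mul_rpow (rpow_nonneg hM _) (rpow_nonneg hm _), ← rpow_mul hM, ← rpow_mul hm]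

lemma integral_interaction_le (hN : 3 ≤ N) : ∃ K r : ℝ, 0 < r ∧ ∀ lam : ℝ, 0 < lam →
    ∫ x, |fprime N (groundW N x - Wl N lam x) - fprime N (Wl N lam x) -
        fprime N (groundW N x)| ^ ((N : ℝ) / 2) ≤
      K * (∫ x : EuclideanSpace ℝ (Fin N),
        min (groundW N x) (Wl N lam x) ^ criticalExponent N) ^ r := by
  have := two_lt_cast_of_three_le hN
  set q := criticalExponent N
  have hq : 0 < q := criticalExponent_pos hN
  set p : ℝ := 4 / ((N : ℝ) - 2)
  -- any `θ < p` with `θ ≤ 1` would do; `θ = p / (p + 1)` is one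
  set θ : ℝ := 4 / ((N : ℝ) + 2)
  have hθ1 : θ ≤ 1 := (div_le_one (by linarith)).2 (by linarith)
  have hθp : θ < p := div_lt_div_of_pos_left (by norm_num) (by linarith) (by linarith)
  set α : ℝ := (p - θ) * (N / 2)
  set β : ℝ := θ * (N / 2)
  have hα : 0 < α := mul_pos (by linarith) (by linarith)
  have hβ : 0 < β := mul_pos (div_pos (by norm_num) (by linarith)) (by linarith)
  have hαβ : α + β = q := by
    have : (N : ℝ) - 2 ≠ 0 := by linarith
    simp only [α, β, p, q, criticalExponent]
    field_simp
    ring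
  set K₁ : ℝ := (((N : ℝ) + 2) / ((N : ℝ) - 2) * (p + 2)) ^ ((N : ℝ) / 2)
  set I := ∫ x : EuclideanSpace ℝ (Fin N), groundW N x ^ q
  refine ⟨K₁ * (2 * I) ^ (α / q), β / q, div_pos hβ hq, fun lam hlam => ?_⟩
  set M := fun x => max (groundW N x) (Wl N lam x)
  set m := fun x => min (groundW N x) (Wl N lam x)
  have hm : 0 ≤ m := fun x => (lt_min (groundW_pos hN x) (Wl_pos hN hlam x)).le
  have hM : 0 ≤ M := fun x => (hm x).trans min_le_max
  have hMm := ((continuous_groundW hN).max (continuous_Wl hN lam)).aestronglyMeasurable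
    (μ := volume)
  have hmm := ((continuous_groundW hN).min (continuous_Wl hN lam)).aestronglyMeasurable
    (μ := volume)
  have hMi := integrable_max_groundW_Wl_rpow hN hlam
  have hmi := integrable_min_groundW_Wl_rpow hN hlam
  have hM0 : 0 ≤ ∫ x, M x ^ q := integral_nonneg fun x => rpow_nonneg (hM x) q
  have hm0 : 0 ≤ ∫ x, m x ^ q := integral_nonneg fun x => rpow_nonneg (hm x) q
  calc _ ≤ ∫ x, K₁ * (M x ^ α * m x ^ β) :=
        integral_mono_of_nonneg (Eventually.of_forall fun x => by positivity)
          ((integrable_rpow_mul_rpow hM hm hMm hmm hα hβ hαβ hMi hmi).const_mul K₁)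
          (Eventually.of_forall fun x => abs_fprime_sub_sub_rpow_le hN (groundW_pos hN x)
            (Wl_pos hN hlam x) hθp.le hθ1)
    _ ≤ K₁ * ((∫ x, M x ^ q) ^ (α / q) * (∫ x, m x ^ q) ^ (β / q)) := by
        rw [integral_const_mul]
        gcongr
        exact integral_rpow_mul_rpow_le hM hm hMm hmm hα hβ hαβ hMi hmi
    _ ≤ K₁ * ((2 * I) ^ (α / q) * (∫ x, m x ^ q) ^ (β / q)) := by
        gcongr
        exact integral_max_groundW_Wl_rpow_le hN hlam
    _ = _ := by ring

lemma tendsto_integral_interaction (hN : 3 ≤ N) :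
    Tendsto (fun lam => ∫ x, |fprime N (groundW N x - Wl N lam x) - fprime N (Wl N lam x) -
        fprime N (groundW N x)| ^ ((N : ℝ) / 2)) (𝓝[>] 0) (𝓝 0) := by
  obtain ⟨K, r, hr, hbound⟩ := integral_interaction_le hN
  have hlim := ((tendsto_integral_min_rpow_criticalExponent hN).rpow_const_nhds_zero hr).const_mul K
  rw [mul_zero] at hlim
  refine squeeze_zero' (Eventually.of_forall fun lam => integral_nonneg fun x => by positivity)
    ?_ hlim
  filter_upwards [self_mem_nhdsWithin] with lam hlam using hbound lam hlam

end Interaction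

theorem fprime_interaction_small (N : ℕ) (hN : 3 ≤ N) :
    ∀ c > (0 : ℝ), ∃ lam₀ > (0 : ℝ), ∀ lam : ℝ, 0 < lam → lam < lam₀ →
      (∫ x, |fprime N (groundW N x - Wl N lam x) - fprime N (Wl N lam x) -
          fprime N (groundW N x)| ^ ((N : ℝ) / 2)) ^ ((2 : ℝ) / N) ≤ c := by
  intro c hc
  have hlim := (tendsto_integral_interaction hN).rpow_const_nhds_zero
    (by have := two_lt_cast_of_three_le hN; positivity : (0 : ℝ) < 2 / N)
  obtain ⟨lam₀, hlam₀, hsub⟩ :=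
    mem_nhdsGT_iff_exists_Ioo_subset.1 (hlim.eventually (ge_mem_nhds hc))
  exact ⟨lam₀, hlam₀, fun lam h₀ h₁ => hsub ⟨h₀, h₁⟩⟩
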